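/- arXiv:2605.24349 — 10 statements merged into one kernel-verified Lean document; each statement's English description precedes it below -/
import Mathlib

section
/- For any n×n complex matrix A and q ∈ ℂ*, one has Per_q(A·P_{σ₀}) = q^{n(n−1)/2} · Per_{q⁻¹}(A), where P_{σ₀} is the permutation matrix of the reversal permutation σ₀(i)=n+1−i. -/
/-- The inversion number of a permutation of `Fin n`. -/
def inversions {n : ℕ} (σ : Equiv.Perm (Fin n)) : ℕ :=
  (Finset.univ.filter (fun p : Fin n × Fin n => p.1 < p.2 ∧ σ p.2 < σ p.1)).card

/-- The q-permanent of a complex matrix. -/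
noncomputable def qperm {n : ℕ} (q : ℂ) (A : Matrix (Fin n) (Fin n) ℂ) : ℂ :=
  ∑ σ : Equiv.Perm (Fin n), q ^ inversions σ * ∏ i, A i (σ i)

open Finset in
lemma card_lt_pairs (n : ℕ) :
    ((Finset.univ : Finset (Fin n × Fin n)).filter (fun p => p.1 < p.2)).card
      = n * (n - 1) / 2 := by
  have hswap : ((Finset.univ : Finset (Fin n × Fin n)).filter (fun p => p.1 < p.2)).card
      = ((Finset.univ : Finset (Fin n × Fin n)).filter (fun p => p.2 < p.1)).card := by
    apply Finset.card_bij' (fun p _ => p.swap) (fun p _ => p.swap) <;>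
      simp [Finset.mem_filter]
  have hunion : ((Finset.univ : Finset (Fin n × Fin n)).filter (fun p => p.1 < p.2)).card
      + ((Finset.univ : Finset (Fin n × Fin n)).filter (fun p => p.2 < p.1)).card
      = n * n - n := by
    rw [← Finset.card_union_of_disjoint]
    · have : ((Finset.univ : Finset (Fin n × Fin n)).filter (fun p => p.1 < p.2)) ∪
          ((Finset.univ : Finset (Fin n × Fin n)).filter (fun p => p.2 < p.1))
          = (Finset.univ : Finset (Fin n × Fin n)).filter (fun p => p.1 ≠ p.2) := by
        rw [← Finset.filter_or]
        apply Finset.filter_congr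
        intro p _
        exact ne_iff_lt_or_gt.symm
      rw [this]
      have := Finset.offDiag_card (Finset.univ : Finset (Fin n))
      rw [Finset.offDiag] at this
      simp only [Finset.univ_product_univ, Finset.card_univ, Fintype.card_fin] at this
      convert this using 2
      ext p
      rw [Finset.mem_filter]
      exact ⟨fun h => (Finset.mem_offDiag (s := Finset.univ)).2 ⟨Finset.mem_univ _, Finset.mem_univ _, h.2⟩,
        fun h => ⟨Finset.mem_univ _, ((Finset.mem_offDiag (s := Finset.univ)).1 h).2.2⟩⟩
    · rw [Finset.disjoint_filter]
      intro p _ h1 h2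
      exact absurd h1 (not_lt.2 h2.le)
  have hnn : n * (n - 1) = n * n - n := by rw [mul_comm, Nat.sub_one_mul]
  omega

lemma inversions_rev_mul {n : ℕ} (τ : Equiv.Perm (Fin n)) :
    inversions ((Fin.revPerm : Equiv.Perm (Fin n)) * τ) = n * (n - 1) / 2 - inversions τ ∧
      inversions τ ≤ n * (n - 1) / 2 := by
  have key : inversions ((Fin.revPerm : Equiv.Perm (Fin n)) * τ) + inversions τ
      = n * (n - 1) / 2 := by
    rw [← card_lt_pairs n]
    unfold inversions
    rw [← Finset.card_union_of_disjoint]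
    · congr 1
      rw [← Finset.filter_or]
      apply Finset.filter_congr
      intro p _
      simp only [Equiv.Perm.coe_mul, Function.comp_apply, Fin.revPerm_apply, Fin.rev_lt_rev]
      constructor
      · rintro (⟨h, _⟩ | ⟨h, _⟩) <;> exact h
      · intro h
        rcases lt_or_gt_of_ne (fun he : τ p.1 = τ p.2 => absurd (τ.injective he) h.ne) with
          h2 | h2
        · exact Or.inl ⟨h, h2⟩
        · exact Or.inr ⟨h, h2⟩
    · rw [Finset.disjoint_filter]
      rintro p _ ⟨_, h1⟩ ⟨_, h2⟩
      simp only [Equiv.Perm.coe_mul, Function.comp_apply, Fin.revPerm_apply, Fin.rev_lt_rev] at h1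
      exact absurd h1 (not_lt.2 h2.le)
  have hnn : n * (n - 1) = n * n - n := by rw [mul_comm, Nat.sub_one_mul]
  omega

theorem qperm_mul_reversal_permMatrix {n : ℕ} (q : ℂ) (hq : q ≠ 0)
    (A : Matrix (Fin n) (Fin n) ℂ) :
    qperm q (A * (Equiv.Perm.permMatrix ℂ (Fin.revPerm : Equiv.Perm (Fin n)))) =
      q ^ (n * (n - 1) / 2) * qperm q⁻¹ A := by
  have hM : A * (Equiv.Perm.permMatrix ℂ (Fin.revPerm : Equiv.Perm (Fin n)))
      = A.submatrix id Fin.revPerm := by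
    rw [Equiv.Perm.permMatrix, PEquiv.mul_toMatrix_toPEquiv]
    congr 1
  rw [hM]
  unfold qperm
  rw [Finset.mul_sum]
  rw [← Equiv.sum_comp (Equiv.mulLeft (Fin.revPerm : Equiv.Perm (Fin n)))]
  apply Finset.sum_congr rfl
  intro τ _
  obtain ⟨h1, h2⟩ := inversions_rev_mul τ
  simp only [Equiv.coe_mulLeft, h1]
  have hpow : q ^ (n * (n - 1) / 2 - inversions τ)
      = q ^ (n * (n - 1) / 2) * q⁻¹ ^ inversions τ := by
    rw [pow_sub₀ q hq h2, ← inv_pow]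
  rw [hpow, mul_assoc]
  congr 1
  congr 1
  apply Finset.prod_congr rfl
  intro i _
  simp [Matrix.submatrix_apply]
end

section
/- Let S_n* = {σ ∈ S_n : σ(i) ≤ i+1 for all i}. For every σ ∈ S_n*, the inversion number ℓ(σ) equals the number of indices i ∈ {1,…,n−1} with σ(i) = i+1. -/
open Finset Equiv Equiv.Perm

namespace Equiv.Perm

variable {n : ℕ}

theorem card_filter_apply_le (σ : Perm (Fin n)) (m : Fin n) : #{j | σ j ≤ m} = m + 1 := by
  rw [← Fin.card_Iic, ← filter_ge_eq_Iic]
  exact card_nbij' σ σ.symm (by simp [Set.MapsTo]) (by simp [Set.MapsTo])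
    (fun _ _ => σ.symm_apply_apply _) (fun _ _ => σ.apply_symm_apply _)

variable {σ : Perm (Fin n)}

theorem existsUnique_le_and_apply_le (hσ : ∀ i : Fin n, (σ i : ℕ) ≤ i + 1) (m : Fin n) :
    ∃! j, m ≤ j ∧ σ j ≤ m := by
  have below : univ.filter (fun j => σ j ≤ m ∧ j < m) = univ.filter (· < m) :=
    filter_congr fun j _ => and_iff_right_of_imp fun hj => by
      have := hσ j; rw [Fin.le_def]; rw [Fin.lt_def] at hj; omega
  have split := card_filter_add_card_filter_not (s := univ.filter (σ · ≤ m)) (· < m)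
  rw [filter_filter, filter_filter, below, filter_gt_eq_Iio, Fin.card_Iio,
    card_filter_apply_le] at split
  rw [Fintype.existsUnique_iff_card_one]
  simp only [not_lt, and_comm (a := m ≤ _)] at split ⊢
  omega

theorem le_and_apply_le_of_inversion (hσ : ∀ i : Fin n, (σ i : ℕ) ≤ i + 1) {i j : Fin n}
    (hij : i < j) (hinv : σ j < σ i) : i ≤ j ∧ σ j ≤ i := by
  have := hσ i
  rw [Fin.lt_def] at hinv
  exact ⟨hij.le, by rw [Fin.le_def]; omega⟩

theorem apply_eq_succ_of_inversion (hσ : ∀ i : Fin n, (σ i : ℕ) ≤ i + 1) {i j : Fin n}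
    (hij : i < j) (hinv : σ j < σ i) : (σ i : ℕ) = i + 1 := by
  by_contra hne
  have hi : σ i ≤ i := by have := hσ i; rw [Fin.le_def]; omega
  exact hij.ne <| (existsUnique_le_and_apply_le hσ i).unique ⟨le_rfl, hi⟩
    (le_and_apply_le_of_inversion hσ hij hinv)

theorem exists_inversion_of_apply_eq_succ (hσ : ∀ i : Fin n, (σ i : ℕ) ≤ i + 1) {i : Fin n}
    (hi : (σ i : ℕ) = i + 1) : ∃ j, i < j ∧ σ j < σ i := by
  obtain ⟨j, ⟨hij, hji⟩, -⟩ := existsUnique_le_and_apply_le hσ i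
  rw [Fin.le_def] at hji
  have hne : i ≠ j := by
    rintro rfl
    omega
  exact ⟨j, lt_of_le_of_ne hij hne, by rw [Fin.lt_def]; omega⟩

end Equiv.Perm

theorem inversions_eq_card_ascents_of_hessenberg {n : ℕ} (σ : Equiv.Perm (Fin n))
    (hσ : ∀ i : Fin n, (σ i : ℕ) ≤ (i : ℕ) + 1) :
    inversions σ = (Finset.univ.filter (fun i : Fin n => (σ i : ℕ) = (i : ℕ) + 1)).card := by
  refine card_bij (fun p _ => p.1) (fun p hp => ?_) (fun p hp q hq hpq => ?_) (fun i hi => ?_)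
  · rw [mem_filter_univ] at hp ⊢
    exact apply_eq_succ_of_inversion hσ hp.1 hp.2
  · obtain ⟨i, j⟩ := p
    obtain ⟨i', j'⟩ := q
    obtain rfl : i = i' := hpq
    rw [mem_filter_univ] at hp hq
    exact Prod.ext rfl <| (existsUnique_le_and_apply_le hσ i).unique
      (le_and_apply_le_of_inversion hσ hp.1 hp.2) (le_and_apply_le_of_inversion hσ hq.1 hq.2)
  · rw [mem_filter_univ] at hi
    obtain ⟨j, hj⟩ := exists_inversion_of_apply_eq_succ hσ hi
    exact ⟨(i, j), by simpa using hj, rfl⟩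
end

section
/- Define H₀ ∈ ℝ^{n×n} by (H₀)_{ij} = 1 if j = i+1 and 0 otherwise. Then for any lower Hessenberg matrix A (i.e., a_{ij}=0 for j>i+1) and any q ∈ ℂ*, Per_q(A) = per(q^{H₀} ∘ A), where q^{H₀} is the matrix with entries q^{(H₀)_{ij}} and ∘ is the entrywise (Hadamard) product. -/
/-- The permanent of a complex matrix. -/
noncomputable def perman {n : ℕ} (A : Matrix (Fin n) (Fin n) ℂ) : ℂ :=
  ∑ σ : Equiv.Perm (Fin n), ∏ i, A i (σ i)

/-- The superdiagonal 0/1 exponent matrix. -/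
def H0 (n : ℕ) : Matrix (Fin n) (Fin n) ℕ :=
  Matrix.of fun i j => if (j : ℕ) = (i : ℕ) + 1 then 1 else 0

/-!
Only permutations with `σ k ≤ k + 1` for all `k` contribute to either side, since `A` is lower
Hessenberg. For such `σ`, row `i` starts exactly `σ i - i` inversions `(i, j)`: at least that many
because the `σ i` rows sent below `σ i` cannot all come before row `i`, and at most that many by
pigeonhole, since the rows `≤ i` together with these `j` are all sent into columns
`≤ max i (σ i)`. Hence `ℓ(σ) = ∑ (σ i - i) = ∑ (H₀)_{i, σ i}`, the exponent of `q` in the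
`σ`-term of `per (q ^ H₀ ∘ A)`.
-/

open Finset

namespace Equiv.Perm

variable {n : ℕ} (σ : Perm (Fin n))

theorem inversions_eq_sum :
    inversions σ = ∑ i, #{j | i < j ∧ σ j < σ i} := by
  simp only [inversions, card_filter, Fintype.sum_prod_type]

theorem sub_le_card_inversions_from (i : Fin n) :
    (σ i : ℕ) - i ≤ #{j | i < j ∧ σ j < σ i} := by
  set T : Finset (Fin n) := {j | i < j ∧ σ j < σ i}
  have hmaps : ∀ v ∈ Iio (σ i), σ.symm v ∈ Iio i ∪ T := by
    intro v hv
    rw [mem_Iio] at hv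
    rcases lt_trichotomy (σ.symm v) i with h | h | h
    · simp [h]
    · simp [← h] at hv
    · simp [T, h, hv]
  have := card_le_card_of_injOn σ.symm hmaps σ.symm.injective.injOn
  have := card_union_le (Iio i) T
  simp only [Fin.card_Iio] at *
  omega

theorem card_inversions_from_le_sub (hσ : ∀ k, (σ k : ℕ) ≤ k + 1) (i : Fin n) :
    #{j | i < j ∧ σ j < σ i} ≤ (σ i : ℕ) - i := by
  set T : Finset (Fin n) := {j | i < j ∧ σ j < σ i}
  have hmaps : ∀ k ∈ Iic i ∪ T, (σ k : ℕ) ∈ range (max (i : ℕ) (σ i) + 1) := by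
    intro k hk
    simp only [mem_union, mem_Iic, T, mem_filter, mem_univ,
      true_and, mem_range, Fin.le_def, Fin.lt_def] at hk ⊢
    rcases hk with hk | ⟨-, hk⟩
    · rcases hk.lt_or_eq with hk | hk
      · have := hσ k; omega
      · rw [Fin.ext hk]; omega
    · omega
  have hinj : Set.InjOn (fun k => (σ k : ℕ)) ↑(Iic i ∪ T) :=
    (Fin.val_injective.comp σ.injective).injOn
  have hdisj : _root_.Disjoint (Iic i) T := by
    rw [disjoint_left]
    exact fun k hk hkT => (mem_Iic.mp hk).not_gt (mem_filter.mp hkT).2.1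
  have := card_le_card_of_injOn _ hmaps hinj
  rw [card_union_of_disjoint hdisj, Fin.card_Iic, card_range] at this
  omega

theorem inversions_eq_sum_sub (hσ : ∀ k, (σ k : ℕ) ≤ k + 1) :
    inversions σ = ∑ i, ((σ i : ℕ) - i) := by
  rw [inversions_eq_sum]
  exact sum_congr rfl fun i _ =>
    (σ.card_inversions_from_le_sub hσ i).antisymm (σ.sub_le_card_inversions_from i)

end Equiv.Perm

theorem H0_apply_eq_sub {n : ℕ} {i j : Fin n} (h : (j : ℕ) ≤ i + 1) :
    H0 n i j = (j : ℕ) - i := by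
  simp only [H0, Matrix.of_apply]
  split_ifs <;> omega

theorem qperm_hessenberg_permanent_general {n : ℕ} (q : ℂ)
    (A : Matrix (Fin n) (Fin n) ℂ)
    (hA : ∀ i j : Fin n, (i : ℕ) + 1 < (j : ℕ) → A i j = 0) :
    qperm q A = perman (Matrix.of fun i j => q ^ (H0 n i j) * A i j) := by
  refine sum_congr rfl fun σ _ => ?_
  simp only [Matrix.of_apply, prod_mul_distrib, prod_pow_eq_pow_sum]
  by_cases hσ : ∀ k, (σ k : ℕ) ≤ k + 1
  · rw [σ.inversions_eq_sum_sub hσ, sum_congr rfl fun i _ => H0_apply_eq_sub (hσ i)]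
  · obtain ⟨k, hk⟩ := not_forall.mp hσ
    rw [prod_eq_zero (mem_univ k) (hA k (σ k) (not_le.mp hk)), mul_zero, mul_zero]

theorem qperm_hessenberg_permanent {n : ℕ} (q : ℂ) (hq : q ≠ 0)
    (A : Matrix (Fin n) (Fin n) ℂ)
    (hA : ∀ i j : Fin n, (i : ℕ) + 1 < (j : ℕ) → A i j = 0) :
    qperm q A = perman (Matrix.of fun i j => q ^ (H0 n i j) * A i j) :=
  qperm_hessenberg_permanent_general q A hA
end

section
/- Define H₀ ∈ ℝ^{n×n} by (H₀)_{ij} = 1 if j = i+1 and 0 otherwise. Then for any lower Hessenberg matrix A and any q ∈ ℂ*, Per_q(A) = det((−q)^{H₀} ∘ A). -/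
open Finset Equiv Equiv.Perm

/-- sign equals (-1)^inversions -/
lemma sign_eq_pow_inversions {n : ℕ} (σ : Equiv.Perm (Fin n)) :
    Equiv.Perm.sign σ = (-1 : ℤˣ) ^ inversions σ := by
  have haux : Equiv.Perm.signAux σ = (-1 : ℤˣ) ^ inversions σ := by
    unfold Equiv.Perm.signAux
    have h1 : ∀ x ∈ finPairsLT n, (if σ x.1 ≤ σ x.2 then (-1 : ℤˣ) else 1)
        = (-1 : ℤˣ) ^ (if σ x.1 ≤ σ x.2 then 1 else 0) := by
      intro x _; split_ifs <;> simp
    rw [Finset.prod_congr rfl h1, Finset.prod_pow_eq_pow_sum]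
    congr 1
    rw [← Finset.card_filter]
    unfold inversions
    apply Finset.card_nbij' (fun x => ((x.2, x.1) : Fin n × Fin n))
      (fun p => (⟨p.2, p.1⟩ : Σ _ : Fin n, Fin n))
    · intro x hx
      simp only [Finset.mem_coe, Finset.mem_filter, Equiv.Perm.mem_finPairsLT] at hx
      obtain ⟨h2, h3⟩ := hx
      simp only [Finset.mem_coe, Finset.mem_filter, Finset.mem_univ, true_and]
      refine ⟨h2, lt_of_le_of_ne h3 ?_⟩
      intro hc
      exact absurd (σ.injective hc) (ne_of_lt h2).symm
    · intro p hp
      simp only [Finset.mem_coe, Finset.mem_filter, Finset.mem_univ, true_and] at hp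
      simp only [Finset.mem_coe, Finset.mem_filter, Equiv.Perm.mem_finPairsLT]
      exact ⟨hp.1, le_of_lt hp.2⟩
    · intro x _; rfl
    · intro p _; rfl
  rcases lt_or_ge n 2 with hn | hn
  · have : σ = 1 := by
      ext i
      have : (σ i : ℕ) < n := (σ i).isLt
      have : (i : ℕ) < n := i.isLt
      omega
    subst this
    rw [map_one, ← haux, Equiv.Perm.signAux_one]
  · have hsurj : Function.Surjective (MonoidHom.mk' (Equiv.Perm.signAux (n := n))
        Equiv.Perm.signAux_mul) := by
      intro u
      rcases Int.units_eq_one_or u with rfl | rfl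
      · exact ⟨1, Equiv.Perm.signAux_one n⟩
      · refine ⟨Equiv.swap ⟨0, by omega⟩ ⟨1, by omega⟩, Equiv.Perm.signAux_swap ?_⟩
        intro hc
        have := congrArg Fin.val hc
        simp at this
    have := Equiv.Perm.eq_sign_of_surjective_hom hsurj
    rw [← this]
    exact haux

/-- Key structural lemma: if `σ m ≤ m` then `σ` maps `{0..m}` to itself, so
anything above `m` is sent above `m`. -/
lemma perm_maps_le {n : ℕ} (σ : Equiv.Perm (Fin n)) (h : ∀ i : Fin n, (σ i : ℕ) ≤ (i : ℕ) + 1)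
    (m : Fin n) (hm : (σ m : ℕ) ≤ m) {b : Fin n} (hb : (m : ℕ) < b) : (m : ℕ) < σ b := by
  by_contra hc
  push_neg at hc
  set T : Finset (Fin n) := Finset.univ.filter (fun i => (i : ℕ) ≤ m) with hT
  have hmap : ∀ i ∈ T, σ i ∈ T := by
    intro i hi
    simp only [hT, Finset.mem_filter, Finset.mem_univ, true_and] at hi ⊢
    have h1 := h i
    rcases Nat.lt_or_ge (σ i : ℕ) ((m : ℕ) + 1) with h2 | h2
    · omega
    · have hi' : (i : ℕ) = m := by omega
      have : i = m := Fin.ext hi'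
      subst this; omega
  have himg : T.image σ = T := by
    apply Finset.eq_of_subset_of_card_le
    · intro x hx
      rcases Finset.mem_image.1 hx with ⟨i, hi, rfl⟩
      exact hmap i hi
    · rw [Finset.card_image_of_injective _ σ.injective]
  have hσb : σ b ∈ T := by
    simp only [hT, Finset.mem_filter, Finset.mem_univ, true_and]; omega
  rw [← himg] at hσb
  rcases Finset.mem_image.1 hσb with ⟨i, hi, hib⟩
  have : i = b := σ.injective hib
  subst this
  simp only [hT, Finset.mem_filter, Finset.mem_univ, true_and] at hi
  omega

lemma exists_partner {n : ℕ} (σ : Equiv.Perm (Fin n)) (h : ∀ i : Fin n, (σ i : ℕ) ≤ (i : ℕ) + 1)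
    (a : Fin n) (ha : (σ a : ℕ) = (a : ℕ) + 1) :
    ∃ b : Fin n, (a : ℕ) < b ∧ (σ b : ℕ) ≤ a := by
  by_contra hc
  push_neg at hc
  set U : Finset (Fin n) := Finset.univ.filter (fun i => (σ i : ℕ) ≤ a) with hU
  set V : Finset (Fin n) := Finset.univ.filter (fun j => (j : ℕ) ≤ a) with hV
  have hcardV : V.card = (a : ℕ) + 1 := by
    have hVeq : V = (Finset.range ((a : ℕ) + 1)).attachFin
        (fun m hm => Nat.lt_of_lt_of_le (Finset.mem_range.1 hm) a.isLt) := by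
      ext j
      simp only [hV, Finset.mem_filter, Finset.mem_univ, true_and, Finset.mem_attachFin,
        Finset.mem_range]
      omega
    rw [hVeq, Finset.card_attachFin, Finset.card_range]
  have hcardU : U.card = V.card := by
    apply Finset.card_nbij' σ σ.symm
    · intro i hi
      simp only [Finset.mem_coe, hU, Finset.mem_filter, Finset.mem_univ, true_and] at hi
      simp only [Finset.mem_coe, hV, Finset.mem_filter, Finset.mem_univ, true_and]
      exact hi
    · intro j hj
      simp only [Finset.mem_coe, hV, Finset.mem_filter, Finset.mem_univ, true_and] at hj
      simp only [Finset.mem_coe, hU, Finset.mem_filter, Finset.mem_univ, true_and,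
        Equiv.apply_symm_apply]
      exact hj
    · intro i _; exact σ.symm_apply_apply i
    · intro j _; exact σ.apply_symm_apply j
  have hsub : U ⊆ V.erase a := by
    intro i hi
    simp only [hU, Finset.mem_filter, Finset.mem_univ, true_and] at hi
    rcases Nat.lt_or_ge (a : ℕ) (i : ℕ) with h2 | h2
    · exact absurd hi (by have := hc i h2; omega)
    · refine Finset.mem_erase.2 ⟨?_, ?_⟩
      · intro hia; subst hia; omega
      · simp only [hV, Finset.mem_filter, Finset.mem_univ, true_and]; exact h2
  have := Finset.card_le_card hsub
  rw [Finset.card_erase_of_mem (by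
    simp only [hV, Finset.mem_filter, Finset.mem_univ, true_and]; exact le_refl _)] at this
  omega

lemma inversions_eq_card {n : ℕ} (σ : Equiv.Perm (Fin n))
    (h : ∀ i : Fin n, (σ i : ℕ) ≤ (i : ℕ) + 1) :
    inversions σ = (Finset.univ.filter fun i : Fin n => (σ i : ℕ) = (i : ℕ) + 1).card := by
  have key : ∀ p : Fin n × Fin n, p.1 < p.2 → σ p.2 < σ p.1 → (σ p.1 : ℕ) = (p.1 : ℕ) + 1 := by
    intro p h1 h2
    have := h p.1
    rcases Nat.lt_or_ge (σ p.1 : ℕ) ((p.1 : ℕ) + 1) with h3 | h3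
    · have hl := perm_maps_le σ h p.1 (by omega) (Fin.lt_def.1 h1)
      have := Fin.lt_def.1 h2
      omega
    · omega
  unfold inversions
  apply Finset.card_bij (fun (p : Fin n × Fin n) _ => p.1)
  · intro p hp
    simp only [Finset.mem_filter, Finset.mem_univ, true_and] at hp
    simp only [Finset.mem_filter, Finset.mem_univ, true_and]
    exact key p hp.1 hp.2
  · intro p hp p' hp' hpp
    simp only [Finset.mem_filter, Finset.mem_univ, true_and] at hp hp'
    have ha : (σ p.1 : ℕ) = (p.1 : ℕ) + 1 := key p hp.1 hp.2
    have ha' : (σ p'.1 : ℕ) = (p'.1 : ℕ) + 1 := key p' hp'.1 hp'.2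
    have h22 : p.2 = p'.2 := by
      by_contra hne
      have hb : (σ p.2 : ℕ) ≤ p.1 := by
        have := Fin.lt_def.1 hp.2; omega
      have hb' : (σ p'.2 : ℕ) ≤ p'.1 := by
        have := Fin.lt_def.1 hp'.2; omega
      rw [hpp] at hb ha
      rcases lt_trichotomy p.2 p'.2 with hlt | heq | hgt
      · have := perm_maps_le σ h p.2 (by
          have := Fin.lt_def.1 hp.1; rw [hpp] at this; omega) (Fin.lt_def.1 hlt)
        have := Fin.lt_def.1 hp'.1
        omega
      · exact hne heq
      · have := perm_maps_le σ h p'.2 (by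
          have := Fin.lt_def.1 hp'.1; omega) (Fin.lt_def.1 hgt)
        have := Fin.lt_def.1 hp.1
        omega
    exact Prod.ext hpp h22
  · intro a ha
    simp only [Finset.mem_filter, Finset.mem_univ, true_and] at ha
    obtain ⟨b, hb1, hb2⟩ := exists_partner σ h a ha
    refine ⟨(a, b), ?_, rfl⟩
    simp only [Finset.mem_filter, Finset.mem_univ, true_and]
    exact ⟨Fin.lt_def.2 hb1, Fin.lt_def.2 (by omega)⟩

theorem qperm_hessenberg_det {n : ℕ} (q : ℂ) (hq : q ≠ 0)
    (A : Matrix (Fin n) (Fin n) ℂ)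
    (hA : ∀ i j : Fin n, (i : ℕ) + 1 < (j : ℕ) → A i j = 0) :
    qperm q A = Matrix.det (Matrix.of fun i j => (-q) ^ (H0 n i j) * A i j) := by
  rw [← Matrix.det_transpose, Matrix.det_apply', qperm]
  apply Finset.sum_congr rfl
  intro σ _
  simp only [Matrix.transpose_apply, Matrix.of_apply]
  by_cases hσ : ∀ i : Fin n, (σ i : ℕ) ≤ (i : ℕ) + 1
  · have hk : ∑ i : Fin n, H0 n i (σ i) = inversions σ := by
      rw [inversions_eq_card σ hσ, Finset.card_filter]
      apply Finset.sum_congr rfl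
      intro i _
      simp [H0]
    rw [Finset.prod_congr rfl (fun i _ => rfl :
        ∀ i ∈ Finset.univ, (-q) ^ (H0 n i (σ i)) * A i (σ i)
          = (-q) ^ (H0 n i (σ i)) * A i (σ i)),
      Finset.prod_mul_distrib, Finset.prod_pow_eq_pow_sum, hk]
    rw [sign_eq_pow_inversions σ]
    have hcast : ((((-1 : ℤˣ) ^ inversions σ : ℤˣ) : ℤ) : ℂ) = (-1 : ℂ) ^ inversions σ := by
      push_cast
      ring
    rw [hcast, ← mul_assoc, ← mul_pow, neg_one_mul, neg_neg]
  · push_neg at hσ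
    obtain ⟨i, hi⟩ := hσ
    have hz : A i (σ i) = 0 := hA i (σ i) hi
    rw [Finset.prod_eq_zero (Finset.mem_univ i) hz,
      Finset.prod_eq_zero (Finset.mem_univ i) (by rw [hz, mul_zero])]
    ring
end

section
/- Let R be a real n×n matrix such that Σ_i r_{i,σ(i)} = 0 for every permutation σ ∈ S_n, with n ≥ 2. Then R can be written as r_{i,j} = u_i + v_j with Σ_i u_i + Σ_j v_j = 0; in particular R has rank at most 2 and trace 0. -/
/-! Precomposing a permutation `σ` with the transposition `(i k)` changes `∑ₓ R x (σ x)` only in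
rows `i` and `k`, by `R i (σ i) + R k (σ k) - R i (σ k) - R k (σ i)`. Since any two distinct rows can be
sent to any two distinct columns, all permutation sums being equal forces the exchange identity
`R i j + R k l = R i l + R k j`, i.e. `R i j = R i j₀ + (R i₀ j - R i₀ j₀)`. Hence `R` is the sum
of a column-constant and a row-constant matrix, of rank at most `2`, and the identity permutation
gives trace `0`. -/

open Equiv

namespace Matrix

variable {ι α : Type*} [Fintype ι] [DecidableEq ι] [AddCommGroup α]

theorem sum_perm_sub_sum_perm_mul_swap (R : Matrix ι ι α) (σ : Perm ι) {i k : ι} (hik : i ≠ k) :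
    ∑ x, R x (σ x) - ∑ x, R x ((σ * Equiv.swap i k) x) =
      R i (σ i) + R k (σ k) - (R i (σ k) + R k (σ i)) := by
  rw [← Finset.sum_sub_distrib, Fintype.sum_eq_add i k hik]
  · simp only [Perm.mul_apply, Equiv.swap_apply_left, Equiv.swap_apply_right]
    abel
  · rintro x ⟨hxi, hxk⟩
    rw [Perm.mul_apply, Equiv.swap_apply_of_ne_of_ne hxi hxk, sub_self]

omit [Fintype ι] in
theorem _root_.Equiv.Perm.exists_apply_eq_and_apply_eq {i k j l : ι} (hik : i ≠ k) (hjl : j ≠ l) :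
    ∃ σ : Perm ι, σ i = j ∧ σ k = l := by
  have hk : Equiv.swap i j k ≠ j := by
    simpa only [Equiv.swap_apply_left] using (Equiv.swap i j).injective.ne hik.symm
  refine ⟨Equiv.swap (Equiv.swap i j k) l * Equiv.swap i j, ?_, ?_⟩
  · rw [Perm.mul_apply, Equiv.swap_apply_left, Equiv.swap_apply_of_ne_of_ne hk.symm hjl]
  · rw [Perm.mul_apply, Equiv.swap_apply_left]

theorem add_eq_add_of_sum_perm_eq (R : Matrix ι ι α) {c : α}
    (h : ∀ σ : Perm ι, ∑ x, R x (σ x) = c) (i k j l : ι) :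
    R i j + R k l = R i l + R k j := by
  rcases eq_or_ne i k with rfl | hik
  · exact add_comm _ _
  rcases eq_or_ne j l with rfl | hjl
  · rfl
  obtain ⟨σ, rfl, rfl⟩ := Perm.exists_apply_eq_and_apply_eq hik hjl
  rw [← sub_eq_zero, ← sum_perm_sub_sum_perm_mul_swap R σ hik, h, h, sub_self]

end Matrix

theorem exists_add_of_add_eq_add {m n α : Type*} [AddCommGroup α] (R : m → n → α)
    (hR : ∀ i k j l, R i j + R k l = R i l + R k j) :
    ∃ (u : m → α) (v : n → α), ∀ i j, R i j = u i + v j := by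
  by_cases hne : Nonempty m ∧ Nonempty n
  · obtain ⟨⟨i₀⟩, ⟨j₀⟩⟩ := hne
    refine ⟨fun i => R i j₀, fun j => R i₀ j - R i₀ j₀, fun i j => ?_⟩
    rw [← add_sub_assoc, ← hR i i₀ j j₀, add_sub_cancel_right]
  · exact ⟨0, 0, fun i j => (hne ⟨⟨i⟩, ⟨j⟩⟩).elim⟩

theorem Matrix.rank_of_add_le_two {m n K : Type*} [Fintype n] [CommSemiring K]
    [StrongRankCondition K] (u : m → K) (v : n → K) :
    (Matrix.of fun i j => u i + v j).rank ≤ 2 := by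
  have hfactor : (Matrix.of fun i j => u i + v j) =
      Matrix.of (fun i => ![u i, 1]) * Matrix.of (fun k j => ![1, v j] k) := by
    ext i j
    simp [Matrix.mul_apply, Fin.sum_univ_two]
  calc _ ≤ Fintype.card (Fin 2) := hfactor ▸ (Matrix.rank_mul_le_left _ _).trans
          (Matrix.rank_le_card_width _)
    _ = 2 := Fintype.card_fin 2

theorem preserver_exponent_structure_general {n : ℕ}
    (R : Matrix (Fin n) (Fin n) ℝ)
    (h : ∀ σ : Equiv.Perm (Fin n), ∑ i, R i (σ i) = 0) :
    (∃ u v : Fin n → ℝ, (∀ i j, R i j = u i + v j) ∧ (∑ i, u i) + (∑ j, v j) = 0)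
      ∧ R.rank ≤ 2 ∧ Matrix.trace R = 0 := by
  have htrace : R.trace = 0 := by simpa [Matrix.trace] using h 1
  obtain ⟨u, v, huv⟩ := exists_add_of_add_eq_add R (R.add_eq_add_of_sum_perm_eq h)
  refine ⟨⟨u, v, huv, ?_⟩, ?_, htrace⟩
  · rw [← Finset.sum_add_distrib, ← htrace]
    simp [Matrix.trace, huv]
  · rw [show R = Matrix.of fun i j => u i + v j from Matrix.ext huv]
    exact Matrix.rank_of_add_le_two u v

theorem preserver_exponent_structure {n : ℕ} (hn : 2 ≤ n)
    (R : Matrix (Fin n) (Fin n) ℝ)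
    (h : ∀ σ : Equiv.Perm (Fin n), ∑ i, R i (σ i) = 0) :
    (∃ u v : Fin n → ℝ, (∀ i j, R i j = u i + v j) ∧ (∑ i, u i) + (∑ j, v j) = 0)
      ∧ R.rank ≤ 2 ∧ Matrix.trace R = 0 :=
  preserver_exponent_structure_general R h
end

section
/- For n ≥ 2, the real vector space R_n = {R ∈ ℝ^{n×n} : Σ_i r_{i,σ(i)} = 0 for all σ ∈ S_n} has dimension 2n − 2. -/
/-!
A matrix all of whose σ-traces vanish satisfies the exchange relation
`R i j + R 0 0 = R i 0 + R 0 j` (compare the σ-traces of `σ` and `σ * swap`), so it is an outer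
sum `R i j = a i + b j`. Conversely every σ-trace of an outer sum equals its trace
`∑ a + ∑ b`. Hence `R_n` is the image of the hyperplane `{∑ a + ∑ b = 0}` of `ℝⁿ × ℝⁿ`, of
dimension `2n - 1`, under `(a, b) ↦ (a i + b j)`, whose kernel is the line through `(1, -1)`
inside that hyperplane.
-/

/-- The space of preserver exponents: matrices all of whose σ-traces vanish. -/
def Rspace (n : ℕ) : Submodule ℝ (Matrix (Fin n) (Fin n) ℝ) where
  carrier := {R | ∀ σ : Equiv.Perm (Fin n), ∑ i, R i (σ i) = 0}
  add_mem' := by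
    intro A B hA hB σ
    simp [Matrix.add_apply, Finset.sum_add_distrib, hA σ, hB σ]
  zero_mem' := by intro σ; simp
  smul_mem' := by
    intro c A hA σ
    simp [Matrix.smul_apply, smul_eq_mul, ← Finset.mul_sum, hA σ]

open Module LinearMap

theorem Submodule.finrank_map_add_finrank_ker {K V W : Type*} [DivisionRing K]
    [AddCommGroup V] [Module K V] [FiniteDimensional K V] [AddCommGroup W] [Module K W]
    {f : V →ₗ[K] W} {T : Submodule K V} (h : ker f ≤ T) :
    finrank K (T.map f) + finrank K (ker f) = finrank K T := by
  rw [← range_domRestrict, ← (comapSubtypeEquivOfLe h).finrank_eq, ← ker_domRestrict,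
    finrank_range_add_finrank_ker]

namespace Matrix

variable {ι K : Type*}

def outerSum [CommSemiring K] : (ι → K) × (ι → K) →ₗ[K] Matrix ι ι K where
  toFun p := of fun i j => p.1 i + p.2 j
  map_add' p q := by ext; simp [add_add_add_comm]
  map_smul' c p := by ext; simp [mul_add]

@[simp]
theorem outerSum_apply [CommSemiring K] (p : (ι → K) × (ι → K)) (i j : ι) :
    outerSum p i j = p.1 i + p.2 j :=
  rfl

theorem ker_outerSum [CommRing K] [Nonempty ι] :
    ker (outerSum : _ →ₗ[K] Matrix ι ι K) = K ∙ (1, -1) := by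
  obtain ⟨i₀⟩ := ‹Nonempty ι›
  ext p
  rw [mem_ker, Submodule.mem_span_singleton]
  constructor
  · intro hp
    have h : ∀ i j, p.1 i + p.2 j = 0 := fun i j => congr_fun₂ hp i j
    refine ⟨p.1 i₀, Prod.ext (funext fun i => ?_) (funext fun j => ?_)⟩
    · simp only [Prod.smul_fst, Pi.smul_apply, Pi.one_apply, smul_eq_mul, mul_one]
      linear_combination h i₀ i₀ - h i i₀
    · simp only [Prod.smul_snd, Pi.smul_apply, Pi.neg_apply, Pi.one_apply, smul_eq_mul,
        mul_neg, mul_one]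
      linear_combination -h i₀ j
  · rintro ⟨c, rfl⟩
    ext i j
    simp

variable [Field K]

theorem finrank_ker_outerSum [Nonempty ι] :
    finrank K (ker (outerSum : _ →ₗ[K] Matrix ι ι K)) = 1 := by
  obtain ⟨i₀⟩ := ‹Nonempty ι›
  rw [ker_outerSum]
  exact finrank_span_singleton fun h => by simpa using congr_fun (congr_arg Prod.fst h) i₀

theorem finrank_ker_trace_outerSum [Fintype ι] [DecidableEq ι] [Nonempty ι] :
    finrank K (ker (traceLinearMap ι K K ∘ₗ outerSum)) + 1 = 2 * Fintype.card ι := by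
  obtain ⟨i₀⟩ := ‹Nonempty ι›
  have hne : traceLinearMap ι K K ∘ₗ outerSum ≠ 0 := fun h => by
    simpa [trace] using LinearMap.congr_fun h (Pi.single i₀ 1, 0)
  rw [Dual.finrank_ker_add_one_of_ne_zero hne]
  simp [two_mul]

end Matrix

open Matrix

theorem outerSum_mem_Rspace {n : ℕ} {p : (Fin n → ℝ) × (Fin n → ℝ)}
    (hp : p ∈ ker (traceLinearMap (Fin n) ℝ ℝ ∘ₗ outerSum)) : outerSum p ∈ Rspace n := by
  intro σ
  have htrace : ∑ i, (p.1 i + p.2 i) = 0 := hp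
  simp only [outerSum_apply, Finset.sum_add_distrib, Equiv.sum_comp σ p.2] at htrace ⊢
  exact htrace

namespace Rspace

theorem apply_add_apply_eq {n : ℕ} {R : Matrix (Fin n) (Fin n) ℝ} (hR : R ∈ Rspace n)
    (σ : Equiv.Perm (Fin n)) (a b : Fin n) :
    R a (σ a) + R b (σ b) = R a (σ b) + R b (σ a) := by
  rcases eq_or_ne a b with rfl | hab
  · rfl
  have hdiff : ∑ k, (R k (σ k) - R k (σ (Equiv.swap a b k))) = 0 := by
    rw [Finset.sum_sub_distrib, hR σ, zero_sub, neg_eq_zero]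
    exact hR (σ * Equiv.swap a b)
  rw [Fintype.sum_eq_add a b hab fun k hk => by rw [Equiv.swap_apply_of_ne_of_ne hk.1 hk.2,
    sub_self], Equiv.swap_apply_left, Equiv.swap_apply_right] at hdiff
  linarith

theorem apply_add_apply_zero_zero {m : ℕ} {R : Matrix (Fin (m + 1)) (Fin (m + 1)) ℝ}
    (hR : R ∈ Rspace (m + 1)) (i j : Fin (m + 1)) : R i j + R 0 0 = R i 0 + R 0 j := by
  rcases eq_or_ne i 0 with rfl | hi
  · ring
  rcases eq_or_ne j 0 with rfl | hj
  · ring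
  simpa [Equiv.swap_apply_of_ne_of_ne hi.symm hj.symm] using
    apply_add_apply_eq hR (Equiv.swap i j) i 0

end Rspace

theorem Rspace_succ_eq_map (m : ℕ) :
    Rspace (m + 1) = (ker (traceLinearMap (Fin (m + 1)) ℝ ℝ ∘ₗ outerSum)).map outerSum := by
  refine le_antisymm (fun R hR => ?_) (Submodule.map_le_iff_le_comap.2 fun p => outerSum_mem_Rspace)
  have hR_eq : outerSum (fun i => R i 0 - R 0 0, fun j => R 0 j) = R := by
    ext i j
    simp only [outerSum_apply]
    linarith [Rspace.apply_add_apply_zero_zero hR i j]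
  refine ⟨_, ?_, hR_eq⟩
  simpa [hR_eq, Matrix.trace] using hR 1

theorem finrank_Rspace_general {n : ℕ} :
    Module.finrank ℝ (Rspace n) = 2 * n - 2 := by
  cases n with
  | zero => simp [finrank_zero_of_subsingleton]
  | succ m =>
    have hmap := Submodule.finrank_map_add_finrank_ker
      (ker_le_ker_comp (outerSum : _ →ₗ[ℝ] Matrix (Fin (m + 1)) (Fin (m + 1)) ℝ)
        (traceLinearMap _ ℝ ℝ))
    have hker := finrank_ker_trace_outerSum (ι := Fin (m + 1)) (K := ℝ)
    rw [finrank_ker_outerSum, ← Rspace_succ_eq_map] at hmap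
    rw [Fintype.card_fin] at hker
    omega

theorem finrank_Rspace {n : ℕ} (hn : 2 ≤ n) :
    Module.finrank ℝ (Rspace n) = 2 * n - 2 :=
  finrank_Rspace_general
end

section
/- Let R_n = {R ∈ ℝ^{n×n} : tr_σ(R) = 0 for all σ ∈ S_n}. If A, B ∈ R_n, then ABA ∈ R_n. In particular R³ ∈ R_n for every R ∈ R_n. -/
open Finset

-- all permutation traces of a matrix of the form (i,j) ↦ a i + b j with total sum 0 vanish
lemma trace_of_decomp {n : ℕ} (M : Matrix (Fin n) (Fin n) ℝ) (a b : Fin n → ℝ)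
    (h : ∀ i j, M i j = a i + b j) (hs : ∑ i, a i + ∑ i, b i = 0) :
    ∀ σ : Equiv.Perm (Fin n), ∑ i, M i (σ i) = 0 := by
  intro σ
  simp only [h]
  rw [Finset.sum_add_distrib, Equiv.sum_comp σ b]
  exact hs

lemma exchange {n : ℕ} (A : Matrix (Fin n) (Fin n) ℝ)
    (hA : ∀ σ : Equiv.Perm (Fin n), ∑ i, A i (σ i) = 0)
    {i i' j j' : Fin n} (hi : i ≠ i') (hj : j ≠ j') :
    A i j + A i' j' = A i j' + A i' j := by
  have hjk : j ≠ Equiv.swap i j i' := by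
    intro h
    apply hi
    have : Equiv.swap i j i = Equiv.swap i j i' := by
      rw [Equiv.swap_apply_left, ← h]
    exact (Equiv.swap i j).injective this
  set σ : Equiv.Perm (Fin n) := Equiv.swap j' (Equiv.swap i j i') * Equiv.swap i j with hσ
  have hσi : σ i = j := by
    simp only [hσ, Equiv.Perm.mul_apply, Equiv.swap_apply_left]
    exact Equiv.swap_apply_of_ne_of_ne hj hjk
  have hσi' : σ i' = j' := by
    simp only [hσ, Equiv.Perm.mul_apply]
    exact Equiv.swap_apply_right _ _
  set τ : Equiv.Perm (Fin n) := σ * Equiv.swap i i' with hτ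
  have hτi : τ i = j' := by
    simp only [hτ, Equiv.Perm.mul_apply, Equiv.swap_apply_left, hσi']
  have hτi' : τ i' = j := by
    simp only [hτ, Equiv.Perm.mul_apply, Equiv.swap_apply_right, hσi]
  have key : ∑ x, (A x (σ x) - A x (τ x)) = 0 := by
    rw [Finset.sum_sub_distrib, hA σ, hA τ]; ring
  rw [← Finset.sum_subset (Finset.subset_univ ({i, i'} : Finset (Fin n)))
    (by
      intro x _ hx
      simp only [Finset.mem_insert, Finset.mem_singleton, not_or] at hx
      have : τ x = σ x := by
        simp only [hτ, Equiv.Perm.mul_apply,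
          Equiv.swap_apply_of_ne_of_ne hx.1 hx.2]
      rw [this, sub_self])] at key
  rw [Finset.sum_pair hi, hσi, hσi', hτi, hτi'] at key
  linarith

lemma decomp {n : ℕ} (hn : 0 < n) (A : Matrix (Fin n) (Fin n) ℝ)
    (hA : ∀ σ : Equiv.Perm (Fin n), ∑ i, A i (σ i) = 0) :
    ∃ u v : Fin n → ℝ, (∀ i j, A i j = u i + v j) ∧ ∑ i, u i = 0 ∧ ∑ i, v i = 0 := by
  set i0 : Fin n := ⟨0, hn⟩
  have hdec : ∀ i j, A i j = A i i0 + (A i0 j - A i0 i0) := by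
    intro i j
    by_cases hi : i = i0
    · subst hi; ring
    · by_cases hj : j = i0
      · subst hj; ring
      · have := exchange A hA hi hj
        linarith
  have htot : ∑ i, A i i0 + ∑ i, (A i0 i - A i0 i0) = 0 := by
    have h1 := hA 1
    simp only [Equiv.Perm.one_apply] at h1
    have : ∑ i, A i i = ∑ i, (A i i0 + (A i0 i - A i0 i0)) := by
      apply Finset.sum_congr rfl; intro i _; exact hdec i i
    rw [this, Finset.sum_add_distrib] at h1
    exact h1
  set c : ℝ := (∑ i, A i i0) / n with hc
  refine ⟨fun i => A i i0 - c, fun j => (A i0 j - A i0 i0) + c, ?_, ?_, ?_⟩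
  · intro i j; rw [hdec i j]; ring
  · rw [Finset.sum_sub_distrib, Finset.sum_const, Finset.card_univ, Fintype.card_fin,
      nsmul_eq_mul, hc]
    field_simp
    ring
  · rw [Finset.sum_add_distrib, Finset.sum_const, Finset.card_univ, Fintype.card_fin,
      nsmul_eq_mul, hc]
    have hne : (n : ℝ) ≠ 0 := Nat.cast_ne_zero.mpr hn.ne'
    rw [Finset.sum_sub_distrib, Finset.sum_const, Finset.card_univ, Fintype.card_fin,
      nsmul_eq_mul] at htot
    field_simp
    rw [Finset.sum_sub_distrib, Finset.sum_const, Finset.card_univ, Fintype.card_fin,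
      nsmul_eq_mul]
    linarith

lemma main_lemma {n : ℕ} (A B : Matrix (Fin n) (Fin n) ℝ)
    (hA : ∀ σ : Equiv.Perm (Fin n), ∑ i, A i (σ i) = 0)
    (hB : ∀ σ : Equiv.Perm (Fin n), ∑ i, B i (σ i) = 0) :
    ∀ σ : Equiv.Perm (Fin n), ∑ i, (A * B * A) i (σ i) = 0 := by
  rcases Nat.eq_zero_or_pos n with h0 | hn
  · subst h0; intro σ; simp
  obtain ⟨u, v, hAd, hu, hv⟩ := decomp hn A hA
  obtain ⟨p, q, hBd, hp, hq⟩ := decomp hn B hB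
  apply trace_of_decomp _ (fun i => ((n : ℝ) * ∑ k, q k * u k) * u i)
    (fun j => ((n : ℝ) * ∑ k, v k * p k) * v j)
  · intro i j
    have step1 : ∀ l, (A * B) i l = (n : ℝ) * (u i * q l) + ∑ k, v k * p k := by
      intro l
      rw [Matrix.mul_apply]
      calc ∑ k, A i k * B k l = ∑ k, (u i * p k + v k * p k + u i * q l + v k * q l) := by
            apply Finset.sum_congr rfl; intro k _; rw [hAd, hBd]; ring
        _ = (n : ℝ) * (u i * q l) + ∑ k, v k * p k := by
            rw [Finset.sum_add_distrib, Finset.sum_add_distrib, Finset.sum_add_distrib,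
              ← Finset.mul_sum, ← Finset.sum_mul, Finset.sum_const, Finset.card_univ,
              Fintype.card_fin, nsmul_eq_mul, hp]
            rw [show (∑ x : Fin n, v x * q l) = (∑ x : Fin n, v x) * q l from
              (Finset.sum_mul _ _ _).symm, hv]
            ring
    rw [Matrix.mul_apply]
    calc ∑ l, (A * B) i l * A l j
        = ∑ l, ((n:ℝ) * u i * (q l * u l) + (n:ℝ) * (u i * v j) * q l
            + (∑ k, v k * p k) * u l + (∑ k, v k * p k) * v j) := by
          apply Finset.sum_congr rfl; intro l _; rw [step1, hAd]; ring
      _ = ((n : ℝ) * ∑ k, q k * u k) * u i + ((n : ℝ) * ∑ k, v k * p k) * v j := by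
          rw [Finset.sum_add_distrib, Finset.sum_add_distrib, Finset.sum_add_distrib,
            ← Finset.mul_sum, ← Finset.mul_sum, ← Finset.mul_sum, Finset.sum_const,
            Finset.card_univ, Fintype.card_fin, nsmul_eq_mul, hq, hu]
          ring
  · rw [← Finset.mul_sum, ← Finset.mul_sum, hu, hv]
    ring

theorem ternary_product_closure {n : ℕ} (A B : Matrix (Fin n) (Fin n) ℝ)
    (hA : ∀ σ : Equiv.Perm (Fin n), ∑ i, A i (σ i) = 0)
    (hB : ∀ σ : Equiv.Perm (Fin n), ∑ i, B i (σ i) = 0) :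
    (∀ σ : Equiv.Perm (Fin n), ∑ i, (A * B * A) i (σ i) = 0) ∧
    ∀ R : Matrix (Fin n) (Fin n) ℝ,
      (∀ σ : Equiv.Perm (Fin n), ∑ i, R i (σ i) = 0) →
      ∀ σ : Equiv.Perm (Fin n), ∑ i, (R * R * R) i (σ i) = 0 :=
  ⟨main_lemma A B hA hB, fun R hR => main_lemma R R hR hR⟩
end

section
/- Let c = (1 2 … n) be the n-cycle in S_n. Then for every ν ∈ S_n, ℓ(c∘ν) − ℓ(ν) = 2ν⁻¹(n) − n − 1. -/
theorem length_cycle_mul {n : ℕ} (ν : Equiv.Perm (Fin (n + 1))) :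
    (inversions (finRotate (n + 1) * ν) : ℤ) - (inversions ν : ℤ) =
      2 * (((ν⁻¹ (Fin.last n) : ℕ) : ℤ) + 1) - (n + 1) - 1 := by
  set k := ν⁻¹ (Fin.last n) with hk
  have hνk : ν k = Fin.last n := Equiv.apply_symm_apply ν _
  have hiff : ∀ a : Fin (n + 1), a = k ↔ ν a = Fin.last n := by
    intro a
    constructor
    · rintro rfl; exact hνk
    · intro h; rw [hk]; exact (Equiv.eq_symm_apply ν).mpr h
  clear_value k
  have hrot : ∀ a : Fin (n + 1), a ≠ Fin.last n → (finRotate (n + 1) a : ℕ) = a + 1 := by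
    intro a ha
    rw [finRotate_succ_apply, Fin.val_add_one]
    simp [ha]
  have hrotlast : finRotate (n + 1) (Fin.last n) = 0 := by
    rw [finRotate_succ_apply, Fin.last_add_one]
  set O : Finset (Fin (n+1) × Fin (n+1)) :=
    Finset.univ.filter (fun p => p.1 < p.2 ∧ p.1 ≠ k ∧ p.2 ≠ k ∧ ν p.2 < ν p.1) with hO
  set T : Finset (Fin (n+1) × Fin (n+1)) :=
    Finset.univ.filter (fun p => p.1 < p.2 ∧ p.2 = k) with hT
  set F : Finset (Fin (n+1) × Fin (n+1)) :=
    Finset.univ.filter (fun p => p.1 < p.2 ∧ p.1 = k) with hF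
  -- cardinalities of T and F
  have hTcard : T.card = (k : ℕ) := by
    have : T = (Finset.Iio k) ×ˢ {k} := by
      ext p
      simp only [hT, Finset.mem_filter, Finset.mem_univ, true_and, Finset.mem_product,
        Finset.mem_Iio, Finset.mem_singleton]
      constructor
      · rintro ⟨h1, rfl⟩; exact ⟨h1, rfl⟩
      · rintro ⟨h1, rfl⟩; exact ⟨h1, rfl⟩
    rw [this, Finset.card_product, Fin.card_Iio, Finset.card_singleton, mul_one]
  have hFcard : F.card = n - (k : ℕ) := by
    have : F = {k} ×ˢ (Finset.Ioi k) := by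
      ext p
      simp only [hF, Finset.mem_filter, Finset.mem_univ, true_and, Finset.mem_product,
        Finset.mem_Ioi, Finset.mem_singleton]
      constructor
      · rintro ⟨h12, rfl⟩; exact ⟨rfl, h12⟩
      · rintro ⟨rfl, h2⟩; exact ⟨h2, rfl⟩
    rw [this, Finset.card_product, Fin.card_Ioi, Finset.card_singleton, one_mul]
    omega
  -- comparison lemma for finRotate
  have hcmp : ∀ a b : Fin (n + 1), a ≠ Fin.last n → b ≠ Fin.last n →
      (finRotate (n + 1) a < finRotate (n + 1) b ↔ a < b) := by
    intro a b ha hb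
    rw [Fin.lt_iff_val_lt_val, Fin.lt_iff_val_lt_val, hrot a ha, hrot b hb]
    omega
  have hlt0 : ∀ a : Fin (n + 1), a ≠ Fin.last n → finRotate (n + 1) (Fin.last n) < finRotate (n + 1) a := by
    intro a ha
    rw [hrotlast, Fin.lt_iff_val_lt_val, hrot a ha]
    simp
  -- decompose the two inversion sets
  have hA : Finset.univ.filter
      (fun p : Fin (n+1) × Fin (n+1) => p.1 < p.2 ∧ (finRotate (n+1) * ν) p.2 < (finRotate (n+1) * ν) p.1)
      = O ∪ T := by
    ext p
    rw [Finset.mem_filter]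
    simp only [Finset.mem_filter, Finset.mem_union, Finset.mem_univ, true_and,
      Equiv.Perm.mul_apply, hO, hT]
    constructor
    · rintro ⟨h12, hlt⟩
      by_cases h2 : p.2 = k
      · right; exact ⟨h12, h2⟩
      · left
        refine ⟨h12, ?_⟩
        have hb : ν p.2 ≠ Fin.last n := fun h => h2 ((hiff p.2).mpr h)
        by_cases h1 : p.1 = k
        · exfalso
          rw [h1, hνk] at hlt
          exact absurd hlt (lt_asymm (hlt0 (ν p.2) hb))
        · have ha : ν p.1 ≠ Fin.last n := fun h => h1 ((hiff p.1).mpr h)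
          exact ⟨h1, h2, (hcmp (ν p.2) (ν p.1) hb ha).mp hlt⟩
    · rintro (⟨h12, h1, h2, hlt⟩ | ⟨h12, h2⟩)
      · refine ⟨h12, ?_⟩
        have ha : ν p.1 ≠ Fin.last n := fun h => h1 ((hiff p.1).mpr h)
        have hb : ν p.2 ≠ Fin.last n := fun h => h2 ((hiff p.2).mpr h)
        exact (hcmp (ν p.2) (ν p.1) hb ha).mpr hlt
      · refine ⟨h12, ?_⟩
        have h1 : p.1 ≠ k := fun h => absurd h12 (by rw [h, h2]; exact lt_irrefl k)
        have ha : ν p.1 ≠ Fin.last n := fun h => h1 ((hiff p.1).mpr h)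
        rw [h2, hνk]
        exact hlt0 (ν p.1) ha
  have hB : Finset.univ.filter
      (fun p : Fin (n+1) × Fin (n+1) => p.1 < p.2 ∧ ν p.2 < ν p.1)
      = O ∪ F := by
    ext p
    simp only [Finset.mem_filter, Finset.mem_union, Finset.mem_univ, true_and, hO, hF]
    constructor
    · rintro ⟨h12, hlt⟩
      by_cases h1 : p.1 = k
      · right; exact ⟨h12, h1⟩
      · left
        refine ⟨h12, h1, fun h2 => ?_, hlt⟩
        rw [(hiff p.2).mp h2] at hlt
        exact absurd hlt (not_lt.mpr (Fin.le_last _))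
    · rintro (⟨h12, _, _, hlt⟩ | ⟨h12, h1⟩)
      · exact ⟨h12, hlt⟩
      · refine ⟨h12, ?_⟩
        rw [h1, hνk]
        have h2 : p.2 ≠ k := fun h => absurd h12 (by rw [h, h1]; exact lt_irrefl k)
        have hb : ν p.2 ≠ Fin.last n := fun h => h2 ((hiff p.2).mpr h)
        exact Fin.lt_last_iff_ne_last.mpr hb
  have hdT : Disjoint O T := by
    rw [Finset.disjoint_left]
    intro p hp hq
    simp only [hO, hT, Finset.mem_filter] at hp hq
    exact hp.2.2.2.1 hq.2.2
  have hdF : Disjoint O F := by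
    rw [Finset.disjoint_left]
    intro p hp hq
    simp only [hO, hF, Finset.mem_filter] at hp hq
    exact hp.2.2.1 hq.2.2
  have hAcard : inversions (finRotate (n + 1) * ν) = O.card + (k : ℕ) := by
    rw [inversions, hA, Finset.card_union_of_disjoint hdT, hTcard]
  have hBcard : inversions ν = O.card + (n - (k : ℕ)) := by
    rw [inversions, hB, Finset.card_union_of_disjoint hdF, hFcard]
  have hkle : (k : ℕ) ≤ n := Fin.is_le k
  rw [hAcard, hBcard]
  push_cast [hkle]
  omega
end

section
/- For n ≥ 5, there is no real n×n matrix M and function δ : S_n → {0,1} with tr_σ(M) = ℓ(σ) − δ_σ for all σ ∈ S_n, where tr_σ(M) = Σ_i m_{i,σ(i)}. -/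
open Equiv Finset Function

section LatinSquare

variable {α β R : Type*} [Fintype α] [Fintype β] [DecidableEq β] [AddCommGroup R]

theorem Equiv.Perm.sum_apply_viaFintypeEmbedding (f : α ↪ β) (σ : Perm α) (M : β → β → R) :
    ∑ i, M i (σ.viaFintypeEmbedding f i) =
      ∑ i, M i i + ∑ a, (M (f a) (f (σ a)) - M (f a) (f a)) := by
  rw [← sub_eq_iff_eq_add', ← sum_sub_distrib,
    ← sum_subset (subset_univ (univ.map f)), sum_map]
  · simp
  · intro i _ hi
    have : i ∉ Set.range f := by simpa using hi
    simp [σ.viaFintypeEmbedding_apply_notMem_range f this]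

theorem sum_sum_apply_eq_of_bijective (g : α → Perm α) (hg : ∀ a, Bijective fun k => g k a)
    (A : α → α → R) : ∑ k, ∑ a, A a (g k a) = ∑ a, ∑ b, A a b := by
  rw [sum_comm]
  exact sum_congr rfl fun a _ => Fintype.sum_bijective _ (hg a) _ _ fun _ => rfl

theorem Equiv.Perm.sum_sum_apply_viaFintypeEmbedding_of_bijective (f : α ↪ β) (g : α → Perm α)
    (hg : ∀ a, Bijective fun k => g k a) (M : β → β → R) :
    ∑ k, ∑ i, M i ((g k).viaFintypeEmbedding f i) =
      Fintype.card α • ∑ i, M i i + ∑ a, ∑ b, (M (f a) (f b) - M (f a) (f a)) := by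
  simp only [Perm.sum_apply_viaFintypeEmbedding, sum_add_distrib, sum_const, card_univ]
  rw [sum_sum_apply_eq_of_bijective g hg fun a b => M (f a) (f b) - M (f a) (f a)]

end LatinSquare

section Inversions

variable {m n : ℕ} (h : m ≤ n) (σ : Perm (Fin m))

theorem Equiv.Perm.viaFintypeEmbedding_castLEEmb_apply_of_le {i : Fin n} (hi : m ≤ i) :
    σ.viaFintypeEmbedding (Fin.castLEEmb h) i = i :=
  σ.viaFintypeEmbedding_apply_notMem_range _ fun ⟨a, ha⟩ => by
    have : (i : ℕ) < m := ha ▸ a.isLt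
    omega

theorem inversions_viaFintypeEmbedding_castLEEmb :
    inversions (σ.viaFintypeEmbedding (Fin.castLEEmb h)) = inversions σ := by
  set τ := σ.viaFintypeEmbedding (Fin.castLEEmb h)
  have hτ : ∀ a, τ (Fin.castLE h a) = Fin.castLE h (σ a) :=
    σ.viaFintypeEmbedding_apply_image (Fin.castLEEmb h)
  have castLE_of_lt : ∀ i : Fin n, (i : ℕ) < m → ∃ a, Fin.castLE h a = i :=
    fun i hi => ⟨⟨i, hi⟩, rfl⟩
  symm
  refine card_bij (fun p _ => (Fin.castLE h p.1, Fin.castLE h p.2)) ?_ ?_ ?_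
  · rintro ⟨a, b⟩ hab
    simpa [hτ] using hab
  · rintro ⟨a, b⟩ _ ⟨c, d⟩ _ hp
    simpa using hp
  · rintro ⟨i, j⟩ hij
    simp only [mem_filter, mem_univ, true_and] at hij
    obtain ⟨hlt, hinv⟩ := hij
    -- `τ` fixes every point `≥ m` and preserves `Fin m`, so no inversion of `τ` leaves `Fin m`.
    have hj : (j : ℕ) < m := by
      by_contra! hj
      rw [σ.viaFintypeEmbedding_castLEEmb_apply_of_le h hj] at hinv
      by_cases hi : (i : ℕ) < m
      · obtain ⟨a, rfl⟩ := castLE_of_lt i hi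
        rw [hτ, Fin.lt_def, Fin.val_castLE] at hinv
        omega
      · rw [σ.viaFintypeEmbedding_castLEEmb_apply_of_le h (not_lt.1 hi)] at hinv
        exact lt_asymm hlt hinv
    obtain ⟨a, rfl⟩ := castLE_of_lt i ((Fin.lt_def.1 hlt).trans hj)
    obtain ⟨b, rfl⟩ := castLE_of_lt j hj
    exact ⟨(a, b), by simpa [hτ] using And.intro hlt hinv, rfl⟩

end Inversions

theorem sum_inversions_addRight_fin_five :
    ∑ k : Fin 5, inversions (Equiv.addRight k) = 20 := by
  decide

theorem sum_inversions_subLeft_fin_five :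
    ∑ k : Fin 5, inversions (Equiv.subLeft k) = 30 := by
  decide

theorem no_mixed_exponent_matrix {n : ℕ} (hn : 5 ≤ n) :
    ¬ ∃ (M : Matrix (Fin n) (Fin n) ℝ) (δ : Equiv.Perm (Fin n) → ℝ),
        (∀ σ, δ σ = 0 ∨ δ σ = 1) ∧
        ∀ σ : Equiv.Perm (Fin n), ∑ i, M i (σ i) = (inversions σ : ℝ) - δ σ := by
  rintro ⟨M, δ, hδ, hM⟩
  let ρ k : Perm (Fin n) := (Equiv.addRight k).viaFintypeEmbedding (Fin.castLEEmb hn)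
  let τ k : Perm (Fin n) := Perm.viaFintypeEmbedding (Equiv.subLeft k) (Fin.castLEEmb hn)
  have htrace : ∑ k, ∑ i, M i (ρ k i) = ∑ k, ∑ i, M i (τ k i) :=
    (Perm.sum_sum_apply_viaFintypeEmbedding_of_bijective _ (fun k => Equiv.addRight k)
      (fun a => (Equiv.addLeft a).bijective) M).trans
    (Perm.sum_sum_apply_viaFintypeEmbedding_of_bijective _ (fun k => Equiv.subLeft k)
      (fun a => (Equiv.subRight a).bijective) M).symm
  have hρ : ∑ k, (inversions (ρ k) : ℝ) = 20 := by
    simp only [ρ, inversions_viaFintypeEmbedding_castLEEmb]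
    exact_mod_cast sum_inversions_addRight_fin_five
  have hτ : ∑ k, (inversions (τ k) : ℝ) = 30 := by
    simp only [τ, inversions_viaFintypeEmbedding_castLEEmb]
    exact_mod_cast sum_inversions_subLeft_fin_five
  have hδ' : ∀ σ, 0 ≤ δ σ ∧ δ σ ≤ 1 := fun σ => by rcases hδ σ with h | h <;> simp [h]
  have hδρ : 0 ≤ ∑ k, δ (ρ k) := sum_nonneg fun k _ => (hδ' _).1
  have hδτ : ∑ k, δ (τ k) ≤ 5 := by
    simpa using sum_le_card_nsmul univ (fun k => δ (τ k)) 1 fun k _ => (hδ' _).2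
  simp only [hM, sum_sub_distrib, hρ, hτ] at htrace
  linarith
end

section
/- For every 2×2 complex matrix A and every q, the identity Per_q(A) = ((1+q)/2)·per(q^M ∘ A) + ((1−q)/2)·det((−q)^M ∘ A) holds with M = [[0,1],[−1,0]], where q^M (resp. (−q)^M) is the entrywise power matrix and ∘ the Hadamard product. -/
@[simp]
lemma inversions_one {n : ℕ} : inversions (1 : Equiv.Perm (Fin n)) = 0 := by
  rw [inversions, Finset.card_eq_zero, Finset.filter_eq_empty_iff]
  exact fun p _ h => lt_asymm h.1 h.2

lemma inversions_swap_zero_one : inversions (Equiv.swap (0 : Fin 2) 1) = 1 := by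
  decide

lemma perman_eq_qperm_one {n : ℕ} (A : Matrix (Fin n) (Fin n) ℂ) : perman A = qperm 1 A := by
  simp only [perman, qperm, one_pow, one_mul]

lemma Finset.univ_perm_fin_two : (univ : Finset (Equiv.Perm (Fin 2))) = {1, Equiv.swap 0 1} := by
  decide

lemma qperm_fin_two (q : ℂ) (A : Matrix (Fin 2) (Fin 2) ℂ) :
    qperm q A = A 0 0 * A 1 1 + q * (A 0 1 * A 1 0) := by
  rw [qperm, Finset.univ_perm_fin_two, Finset.sum_pair (by decide)]
  simp [inversions_swap_zero_one, Fin.prod_univ_two]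

theorem mixed_polya_two_general {q : ℂ} (A : Matrix (Fin 2) (Fin 2) ℂ) :
    qperm q A =
      (1 + q) / 2 * perman (Matrix.of fun i j => q ^ (!![(0 : ℤ), 1; -1, 0] i j) * A i j) +
      (1 - q) / 2 *
        Matrix.det (Matrix.of fun i j => (-q) ^ (!![(0 : ℤ), 1; -1, 0] i j) * A i j) := by
  rw [perman_eq_qperm_one, qperm_fin_two, qperm_fin_two, Matrix.det_fin_two]
  simp only [Matrix.of_apply, Matrix.cons_val', Matrix.cons_val_zero, Matrix.cons_val_one,
    Matrix.empty_val', Matrix.cons_val_fin_one, zpow_zero, zpow_one, zpow_neg]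
  have neg_mul_inv_neg : -q * (-q)⁻¹ = q * q⁻¹ := by rw [inv_neg, neg_mul_neg]
  linear_combination (-(1 - q) / 2 * (A 0 1 * A 1 0)) * neg_mul_inv_neg
    - A 0 1 * A 1 0 * mul_self_mul_inv q

theorem mixed_polya_two {q : ℂ} (hq : q ≠ 0) (A : Matrix (Fin 2) (Fin 2) ℂ) :
    qperm q A =
      (1 + q) / 2 * perman (Matrix.of fun i j => q ^ (!![(0 : ℤ), 1; -1, 0] i j) * A i j) +
      (1 - q) / 2 *
        Matrix.det (Matrix.of fun i j => (-q) ^ (!![(0 : ℤ), 1; -1, 0] i j) * A i j) :=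
  mixed_polya_two_general A
end
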